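/- arXiv:1705.00719 — 2 statements merged into one kernel-verified Lean document; each statement's English description precedes it below -/
import Mathlib

section
/- Let X be a linearly ordered set, n ≥ 3, and let F : X^n → X be quasitrivial, symmetric, nondecreasing, and associative. Then F(x,...,x,y) = F(x,y,...,y) (with n−1 copies of x on the left, n−1 copies of y on the right) for all x,y ∈ X. -/
/-- `F` is quasitrivial: it always outputs one of its arguments. -/
def Quasitrivial {X : Type*} {n : ℕ} (F : (Fin n → X) → X) : Prop :=
  ∀ x : Fin n → X, ∃ i, F x = x i

/-- `F` is symmetric: invariant under permutation of its arguments. -/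
def Symm {X : Type*} {n : ℕ} (F : (Fin n → X) → X) : Prop :=
  ∀ (x : Fin n → X) (σ : Equiv.Perm (Fin n)), F (x ∘ σ) = F x

/-- `F` is nondecreasing in each argument. -/
def Nondecr {X : Type*} [LinearOrder X] {n : ℕ} (F : (Fin n → X) → X) : Prop :=
  ∀ x y : Fin n → X, (∀ i, x i ≤ y i) → F x ≤ F y

/-- `x` is an isolated point for `F`. -/
def Isolated {X : Type*} {n : ℕ} (F : (Fin n → X) → X) (x : Fin n → X) : Prop :=
  ∀ y : Fin n → X, F y = F x → y = x

/-- `e` is a neutral element of the `n`-ary operation `F`. -/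
def Neutral {X : Type*} {n : ℕ} (F : (Fin n → X) → X) (e : X) : Prop :=
  ∀ (i : Fin n) (x : X), F (Function.update (fun _ => e) i x) = x

/-- `n`-ary associativity: substituting `F` over the block of `n` consecutive
arguments starting at position `i` (0-based) of a `(2n-1)`-tuple gives the same
result as substituting over the block starting at position `i+1`. -/
def NAssoc {X : Type*} (n : ℕ) (F : (Fin n → X) → X) : Prop :=
  ∀ (x : ℕ → X) (i : ℕ), i + 2 ≤ n →
    F (fun j : Fin n => if (j : ℕ) < i then x j
        else if (j : ℕ) = i then F (fun k : Fin n => x (i + k)) else x (j + n - 1))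
    = F (fun j : Fin n => if (j : ℕ) < i + 1 then x j
        else if (j : ℕ) = i + 1 then F (fun k : Fin n => x (i + 1 + k)) else x (j + n - 1))

/-- `F` is bisymmetric. -/
def Bisymm {X : Type*} {n : ℕ} (F : (Fin n → X) → X) : Prop :=
  ∀ M : Fin n → Fin n → X,
    F (fun i => F (M i)) = F (fun j => F (fun i => M i j))

/-- `F` is ultrabisymmetric: the value `F (F ∘ rows)` is unchanged when two
entries of the matrix are exchanged. -/
def UltraBisymm {X : Type*} {n : ℕ} (F : (Fin n → X) → X) : Prop :=
  ∀ (M : Fin n → Fin n → X) (p q : Fin n × Fin n),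
    F (fun i => F (M i)) =
    F (fun i => F (fun j =>
      if (i, j) = p then M q.1 q.2 else if (i, j) = q then M p.1 p.2 else M i j))

/-- Iterated left composition `x 0 ∘ x 1 ∘ ⋯ ∘ x k` for a binary operation. -/
def iterComp {X : Type*} (H : X → X → X) (x : ℕ → X) : ℕ → X
  | 0 => x 0
  | k + 1 => H (iterComp H x k) (x (k + 1))

/-- The `n`-ary operation `F` is derived from the binary operation `H`. -/
def DerivedFrom {X : Type*} {n : ℕ} (F : (Fin n → X) → X) (H : X → X → X) : Prop :=
  ∀ x : ℕ → X, F (fun i : Fin n => x i) = iterComp H x (n - 1)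

/-!
Put `A = F(x,…,x,y)`. Associativity applied to the `(2n-1)`-tuple `(x,…,x,y,…,y)` with `n` copies of
`y`, bracketing first the leading and then the trailing block, gives `F(A,y,…,y) = A`, because
`F(y,…,y) = y`. By quasitriviality `A ∈ {x, y}`: if `A = x` this is the claim; if `A = y` then
`F(x,y,…,y) ∈ {x, y}`, and the value `x` is excluded unless `x = y`, since the two tuples are
comparable coordinatewise and `F` is nondecreasing.
-/

section

variable {X : Type*} {n : ℕ} {F : (Fin n → X) → X}

theorem Quasitrivial.apply_const (hq : Quasitrivial F) (x : X) : F (fun _ => x) = x :=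
  (hq _).elim fun _ h => h

theorem Quasitrivial.apply_eq_or (hq : Quasitrivial F) {v : Fin n → X} {x y : X}
    (hv : ∀ i, v i = x ∨ v i = y) : F v = x ∨ F v = y := by
  obtain ⟨i, hi⟩ := hq v
  exact hi ▸ hv i

/-- The argument tuple of the `i`-th side of `NAssoc`. -/
def substBlock (F : (Fin n → X) → X) (x : ℕ → X) (i : ℕ) : Fin n → X :=
  fun j => if (j : ℕ) < i then x j
    else if (j : ℕ) = i then F (fun k : Fin n => x (i + k)) else x (j + n - 1)

theorem NAssoc.apply_substBlock_zero (ha : NAssoc n F) (x : ℕ → X) :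
    ∀ i ≤ n - 1, F (substBlock F x 0) = F (substBlock F x i)
  | 0, _ => rfl
  | i + 1, hi => (ha.apply_substBlock_zero x i (by omega)).trans (ha x i (by omega))

def lastDiffers (n : ℕ) (x y : X) : Fin n → X := fun i => if (i : ℕ) < n - 1 then x else y

def firstDiffers (n : ℕ) (x y : X) : Fin n → X := fun i => if (i : ℕ) = 0 then x else y

theorem apply_firstDiffers_apply_lastDiffers (hq : Quasitrivial F) (ha : NAssoc n F) (x y : X) :
    F (firstDiffers n (F (lastDiffers n x y)) y) = F (lastDiffers n x y) := by
  let t : ℕ → X := fun k => if k < n - 1 then x else y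
  have hfirst : substBlock F t 0 = firstDiffers n (F (lastDiffers n x y)) y := by
    funext j
    by_cases hj : (j : ℕ) = 0
    · simp only [substBlock, firstDiffers, hj, lt_irrefl, if_false, if_true, zero_add]
      rfl
    · simp [substBlock, firstDiffers, t, hj, show ¬ (j : ℕ) + n - 1 < n - 1 by omega]
  have hlast : substBlock F t (n - 1) = lastDiffers n x y := by
    have hy : F (fun k : Fin n => t (n - 1 + k)) = y := by
      simpa [t] using hq.apply_const y
    funext j
    by_cases hj : (j : ℕ) < n - 1
    · simp [substBlock, lastDiffers, t, hj]
    · simp [substBlock, lastDiffers, show (j : ℕ) = n - 1 by omega, hy]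
  rw [← hfirst, ← hlast]
  exact ha.apply_substBlock_zero t (n - 1) le_rfl

section LinearOrder

variable [LinearOrder X]

theorem lastDiffers_le_firstDiffers (hn : 2 ≤ n) {x y : X} (h : x ≤ y) :
    lastDiffers n x y ≤ firstDiffers n x y := by
  intro i
  simp only [lastDiffers, firstDiffers]
  split_ifs <;> first | rfl | exact h | omega

theorem firstDiffers_le_lastDiffers (hn : 2 ≤ n) {x y : X} (h : y ≤ x) :
    firstDiffers n x y ≤ lastDiffers n x y := by
  intro i
  simp only [lastDiffers, firstDiffers]
  split_ifs <;> first | rfl | exact h | omega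

end LinearOrder

end

theorem stmt_5_general {X : Type*} [LinearOrder X] {n : ℕ} (hn : 3 ≤ n)
    (F : (Fin n → X) → X) (hq : Quasitrivial F)
    (hm : Nondecr F) (ha : NAssoc n F) :
    ∀ x y : X,
      F (fun i => if (i : ℕ) < n - 1 then x else y)
        = F (fun i => if (i : ℕ) = 0 then x else y) := by
  intro x y
  have hkey := apply_firstDiffers_apply_lastDiffers hq ha x y
  change F (lastDiffers n x y) = F (firstDiffers n x y)
  rcases hq.apply_eq_or (v := lastDiffers n x y) fun _ => ite_eq_or_eq _ _ _ with hA | hA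
  · rw [hA] at hkey ⊢
    exact hkey.symm
  rcases hq.apply_eq_or (v := firstDiffers n x y) fun _ => ite_eq_or_eq _ _ _ with hB | hB
  · have hxy : x = y := by
      obtain h | h := le_total x y
      · have := hm _ _ (lastDiffers_le_firstDiffers (by omega) h)
        rw [hA, hB] at this
        exact le_antisymm h this
      · have := hm _ _ (firstDiffers_le_lastDiffers (by omega) h)
        rw [hA, hB] at this
        exact le_antisymm this h
    rw [hA, hB, hxy]
  · exact hA.trans hB.symm

theorem stmt_5 {X : Type*} [LinearOrder X] {n : ℕ} (hn : 3 ≤ n)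
    (F : (Fin n → X) → X) (hq : Quasitrivial F) (hs : Symm F)
    (hm : Nondecr F) (ha : NAssoc n F) :
    ∀ x y : X,
      F (fun i => if (i : ℕ) < n - 1 then x else y)
        = F (fun i => if (i : ℕ) = 0 then x else y) :=
  stmt_5_general hn F hq hm ha
end

section
/- If F : X^n → X is quasitrivial, then for all x,y ∈ X there exists k ∈ {1,...,n} such that F applied to (k−1 copies of x followed by n−k+1 copies of y) equals y, and F applied to (k copies of x followed by n−k copies of y) equals x. -/
theorem Nat.exists_lt_not_and_succ {p : ℕ → Prop} {n : ℕ} (h0 : ¬p 0) (hn : p n) :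
    ∃ k < n, ¬p k ∧ p (k + 1) := by
  induction n with
  | zero => exact absurd hn h0
  | succ n ih =>
    by_cases hpn : p n
    · obtain ⟨k, hkn, hk⟩ := ih hpn
      exact ⟨k, by omega, hk⟩
    · exact ⟨n, by omega, hpn, hn⟩

namespace Quasitrivial

variable {X : Type*} {n : ℕ} {F : (Fin n → X) → X}

theorem pos (hq : Quasitrivial F) (x : X) : 0 < n :=
  (hq fun _ => x).choose.pos

theorem apply_const_s17 (hq : Quasitrivial F) (x : X) : F (fun _ => x) = x :=
  (hq fun _ => x).choose_spec

theorem apply_ite_eq_or (hq : Quasitrivial F) (p : Fin n → Prop) [DecidablePred p] (x y : X) :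
    F (fun i => if p i then x else y) = x ∨ F (fun i => if p i then x else y) = y := by
  obtain ⟨i, hi⟩ := hq fun i => if p i then x else y
  rw [hi]
  split_ifs
  exacts [Or.inl rfl, Or.inr rfl]

end Quasitrivial

theorem stmt_17_general {X : Type*} {n : ℕ} (F : (Fin n → X) → X)
    (hq : Quasitrivial F) :
    ∀ x y : X, ∃ k : ℕ, 1 ≤ k ∧ k ≤ n ∧
      F (fun i => if (i : ℕ) < k - 1 then x else y) = y ∧
      F (fun i => if (i : ℕ) < k then x else y) = x := by
  intro x y
  set f : ℕ → X := fun k => F fun i => if (i : ℕ) < k then x else y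
  have hf0 : f 0 = y := by simpa [f] using hq.apply_const_s17 y
  have hfn : f n = x := by simpa [f] using hq.apply_const_s17 x
  -- `0 < k` keeps the predicate false at `0` even when `x = y`.
  obtain ⟨k, hkn, hk, hk1⟩ :=
    Nat.exists_lt_not_and_succ (p := fun k => 0 < k ∧ f k = x) (by simp) ⟨hq.pos x, hfn⟩
  refine ⟨k + 1, by omega, hkn, ?_, hk1.2⟩
  rw [add_tsub_cancel_right]
  rcases k.eq_zero_or_pos with rfl | hk0
  · exact hf0
  · exact (hq.apply_ite_eq_or _ x y).resolve_left fun h => hk ⟨hk0, h⟩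

theorem stmt_17 {X : Type*} {n : ℕ} (hn : 2 ≤ n) (F : (Fin n → X) → X)
    (hq : Quasitrivial F) :
    ∀ x y : X, ∃ k : ℕ, 1 ≤ k ∧ k ≤ n ∧
      F (fun i => if (i : ℕ) < k - 1 then x else y) = y ∧
      F (fun i => if (i : ℕ) < k then x else y) = x :=
  stmt_17_general F hq
end
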